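/- Let A be Hermitian with eigendecomposition as above, V ∈ ℂ^{n×m}, Φ ∈ ℂ^{m×m} invertible with Ψ_{≤m}^* V Φ invertible, E ∈ ℂ^{n×m}, and V' = A V Φ + E with Ψ_{≤m}^* V' invertible. If ‖E‖_2 / |λ_m| < (1/κ_2(Ψ_{≤m}^* V Φ) - |λ_{m+1}/λ_m|) · ‖Ψ_{≤m}^* V Φ‖_2 · ‖Ψ_{>m}^* V Φ‖_2 / ‖V Φ‖_2, then σ_1(T_{V'}) < σ_1(T_{VΦ}), where T_W = Ψ_{>m}^* W (Ψ_{≤m}^* W)^{-1} and κ_2 is the spectral condition number. Consequently the largest principal angle between range(V') and range(Ψ_{≤m}) is strictly smaller than that between range(V) and range(Ψ_{≤m}). -/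

import Mathlib

/-!
Write `W = VΦ`, `X = Ψ₁ᴴW`, `Y = Ψ₂ᴴW`, `T = YX⁻¹` and `t = ‖T‖`. Since `A` is Hermitian,
`Ψ₁ᴴV' = Λ₁X + Ψ₁ᴴE` and `Ψ₂ᴴV' = Λ₂Y + Ψ₂ᴴE` with `Λᵢ` diagonal. For every vector `v`,
`‖Ψ₂ᴴV'v‖ ≤ |λ_{m+1}| t ‖Xv‖ + ‖Ψ₂ᴴEv‖` and `t ‖Ψ₁ᴴV'v‖ ≥ t |λ_m| ‖Xv‖ - t ‖Ψ₁ᴴEv‖`, while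
Cauchy–Schwarz and `‖Ψ₁ᴴEv‖² + ‖Ψ₂ᴴEv‖² = ‖Ev‖²` give
`t ‖Ψ₁ᴴEv‖ + ‖Ψ₂ᴴEv‖ ≤ √(1 + t²) ‖E‖ ‖v‖`. Hence `‖Ψ₂ᴴV'v‖ + δ‖v‖ ≤ t ‖Ψ₁ᴴV'v‖` with
`δ = t (|λ_m| - |λ_{m+1}|) σ_min(X) - √(1 + t²) ‖E‖`, and putting `v = (Ψ₁ᴴV')⁻¹u` yields
`‖T_{V'}‖ ≤ t - δ / ‖Ψ₁ᴴV'‖`. The bound on `‖E‖` is exactly what makes `δ` positive, once one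
knows `‖Y‖ √(1 + t²) ≤ t ‖W‖` (`‖Y‖ ≤ ‖W‖ sin θ` where `tan θ = t`).
-/

open Matrix
open scoped Matrix.Norms.L2Operator

/-- The smallest singular value of a square complex matrix, as the infimum of `‖Xv‖` over
unit vectors `v`. -/
noncomputable def smallestSingularValue {m : ℕ} (X : Matrix (Fin m) (Fin m) ℂ) : ℝ :=
  ⨅ v : {v : EuclideanSpace ℂ (Fin m) // ‖v‖ = 1}, ‖Matrix.toEuclideanLin X v.1‖

/-- The spectral (2-norm) condition number `κ₂(X) = σ₁(X)/σ_m(X)`. -/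
noncomputable def cond2 {m : ℕ} (X : Matrix (Fin m) (Fin m) ℂ) : ℝ :=
  ‖X‖ / smallestSingularValue X

lemma mul_add_le_sqrt_mul_sqrt (t a b : ℝ) : t * a + b ≤ √(1 + t ^ 2) * √(a ^ 2 + b ^ 2) := by
  rw [← Real.sqrt_mul (by positivity)]
  exact (le_abs_self _).trans (Real.abs_le_sqrt (by nlinarith [sq_nonneg (a - t * b)]))

lemma mul_sqrt_one_add_sq_le {t x y w : ℝ} (ht : 0 ≤ t) (hy : 0 ≤ y) (hw : 0 ≤ w)
    (hxyw : x ^ 2 + y ^ 2 = w ^ 2) (hyx : y ≤ t * x) : y * √(1 + t ^ 2) ≤ t * w := by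
  rw [← pow_le_pow_iff_left₀ (by positivity) (by positivity) two_ne_zero, mul_pow, mul_pow,
    Real.sq_sqrt (by positivity), ← hxyw]
  nlinarith [pow_le_pow_left₀ hy hyx 2]

/-- In the application `ε = ‖E‖`, `a = |λ_m|`, `b = |λ_{m+1}|`, `σ = σ_min(X)`, `x = ‖X‖`,
`y = ‖Y‖`, `w = ‖W‖`, `t = ‖T‖` and `s = √(1 + t²)`; the hypothesis `h` is the bound on `‖E‖`
with `κ₂(X) = x / σ`. Both divisions by `x` and `w` may be junk divisions by zero. -/
lemma mul_lt_mul_sub_mul_of_div_lt {ε a b σ x y w t s : ℝ} (ha : 0 < a) (hba : b ≤ a)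
    (hb : 0 ≤ b) (hσ : 0 ≤ σ) (hσx : σ ≤ x) (ht : 0 ≤ t) (hs : 0 < s) (hy : 0 ≤ y)
    (hw : 0 ≤ w) (hysw : y * s ≤ t * w) (h : ε / a < (1 / (x / σ) - b / a) * x * y / w) :
    s * ε < t * (a - b) * σ := by
  have hgap : (1 / (x / σ) - b / a) * x ≤ σ * (a - b) / a := by
    have hσxx : σ / x * x ≤ σ := by
      rcases eq_or_ne x 0 with rfl | hx
      · simpa using hσ
      · rw [div_mul_cancel₀ _ hx]
    have hbx : b / a * σ ≤ b / a * x := mul_le_mul_of_nonneg_left hσx (by positivity)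
    calc (1 / (x / σ) - b / a) * x ≤ σ - b / a * σ := by rw [one_div_div, sub_mul]; linarith
      _ = σ * (a - b) / a := by field_simp
  have hyw : y / w ≤ t / s := by
    rcases eq_or_ne w 0 with rfl | hw'
    · simpa using div_nonneg ht hs.le
    · rw [div_le_div_iff₀ (lt_of_le_of_ne hw (Ne.symm hw')) hs]
      linarith
  have hε : ε / a < σ * (a - b) / a * (t / s) := by
    refine h.trans_le ?_
    rw [mul_div_assoc]
    exact mul_le_mul hgap hyw (div_nonneg hy hw) (by have := sub_nonneg.2 hba; positivity)
  rw [div_lt_iff₀ ha, div_mul_eq_mul_div, div_mul_cancel₀ _ ha.ne', mul_div_assoc',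
    lt_div_iff₀ hs] at hε
  linarith

namespace Matrix

variable {𝕜 : Type*} [RCLike 𝕜] {l m n r : Type*} [Fintype l] [Fintype m] [Fintype n]
  [DecidableEq n] [Fintype r] [DecidableEq r]

lemma norm_toEuclideanLin_apply_le (A : Matrix m n 𝕜) (x : EuclideanSpace 𝕜 n) :
    ‖toEuclideanLin A x‖ ≤ ‖A‖ * ‖x‖ :=
  A.l2_opNorm_mulVec x

lemma l2_opNorm_le_of_forall_le {A : Matrix m n 𝕜} {c : ℝ} (hc : 0 ≤ c)
    (h : ∀ x, ‖toEuclideanLin A x‖ ≤ c * ‖x‖) : ‖A‖ ≤ c :=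
  ContinuousLinearMap.opNorm_le_bound _ hc h

lemma norm_toEuclideanLin_conjTranspose_apply_sq [DecidableEq m] (P : Matrix m n 𝕜)
    (w : EuclideanSpace 𝕜 m) :
    ‖toEuclideanLin Pᴴ w‖ ^ 2 = RCLike.re (inner 𝕜 w (toEuclideanLin (P * Pᴴ) w)) := by
  rw [norm_sq_eq_re_inner (𝕜 := 𝕜), toLpLin_mul_same, LinearMap.comp_apply,
    toEuclideanLin_conjTranspose_eq_adjoint, LinearMap.adjoint_inner_left]

lemma norm_sq_add_norm_sq_of_mul_conjTranspose_add [DecidableEq m] [DecidableEq l]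
    {P : Matrix m n 𝕜} {Q : Matrix m l 𝕜} (h : P * Pᴴ + Q * Qᴴ = 1) (W : Matrix m r 𝕜)
    (v : EuclideanSpace 𝕜 r) :
    ‖toEuclideanLin (Pᴴ * W) v‖ ^ 2 + ‖toEuclideanLin (Qᴴ * W) v‖ ^ 2
      = ‖toEuclideanLin W v‖ ^ 2 := by
  rw [toLpLin_mul_same, toLpLin_mul_same, LinearMap.comp_apply, LinearMap.comp_apply,
    norm_toEuclideanLin_conjTranspose_apply_sq, norm_toEuclideanLin_conjTranspose_apply_sq,
    ← map_add, ← inner_add_right, ← LinearMap.add_apply, ← map_add, h, toLpLin_one,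
    LinearMap.id_apply, inner_self_eq_norm_sq]

lemma l2_opNorm_diagonal_le {d : n → 𝕜} {c : ℝ} (hc : 0 ≤ c) (h : ∀ i, ‖d i‖ ≤ c) :
    ‖diagonal d‖ ≤ c := by
  rw [l2_opNorm_diagonal]
  exact (pi_norm_le_iff_of_nonneg hc).2 h

lemma mul_norm_le_norm_toEuclideanLin_diagonal {d : n → 𝕜} {c : ℝ} (hc : 0 ≤ c)
    (h : ∀ i, c ≤ ‖d i‖) (x : EuclideanSpace 𝕜 n) :
    c * ‖x‖ ≤ ‖toEuclideanLin (diagonal d) x‖ := by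
  rw [← pow_le_pow_iff_left₀ (by positivity) (norm_nonneg _) two_ne_zero, mul_pow,
    EuclideanSpace.norm_sq_eq, EuclideanSpace.norm_sq_eq, Finset.mul_sum]
  refine Finset.sum_le_sum fun i _ => ?_
  simp only [toLpLin_apply, mulVec_diagonal, PiLp.toLp_apply, norm_mul, mul_pow]
  gcongr
  exact h i

lemma IsHermitian.conjTranspose_mul_eq {A : Matrix m m 𝕜} (hA : A.IsHermitian)
    {Ψ : Matrix m n 𝕜} {d : n → 𝕜} (h : A * Ψ = Ψ * diagonal d) :
    Ψᴴ * A = diagonal (star d) * Ψᴴ := by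
  simpa [conjTranspose_mul, hA.eq] using congrArg (·ᴴ) h

lemma l2_opNorm_mul_sqrt_one_add_sq_le [DecidableEq m] [DecidableEq l] {Ψ1 : Matrix m n 𝕜}
    {Ψ2 : Matrix m l 𝕜} (hΨ : Ψ1 * Ψ1ᴴ + Ψ2 * Ψ2ᴴ = 1) {W : Matrix m r 𝕜} {T : Matrix l n 𝕜}
    (hT : T * (Ψ1ᴴ * W) = Ψ2ᴴ * W) :
    ‖Ψ2ᴴ * W‖ * √(1 + ‖T‖ ^ 2) ≤ ‖T‖ * ‖W‖ := by
  have hs : 0 < √(1 + ‖T‖ ^ 2) := Real.sqrt_pos.2 (by positivity)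
  rw [← le_div_iff₀ hs]
  refine l2_opNorm_le_of_forall_le (by positivity) fun v => ?_
  rw [div_mul_eq_mul_div, le_div_iff₀ hs, mul_assoc]
  have hYv : ‖toEuclideanLin (Ψ2ᴴ * W) v‖ ≤ ‖T‖ * ‖toEuclideanLin (Ψ1ᴴ * W) v‖ := by
    rw [← hT, toLpLin_mul_same, LinearMap.comp_apply]
    exact norm_toEuclideanLin_apply_le _ _
  exact (mul_sqrt_one_add_sq_le (norm_nonneg _) (norm_nonneg _) (norm_nonneg _)
    (norm_sq_add_norm_sq_of_mul_conjTranspose_add hΨ W v) hYv).trans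
    (mul_le_mul_of_nonneg_left (norm_toEuclideanLin_apply_le W v) (norm_nonneg T))

lemma norm_add_le_of_perturbed_blocks [DecidableEq l] {Λ1 : Matrix n n 𝕜} {Λ2 : Matrix l l 𝕜}
    {X F1 : Matrix n r 𝕜} {Y F2 : Matrix l r 𝕜} {T : Matrix l n 𝕜} {a b σ ε : ℝ}
    (hTX : T * X = Y) (hΛ1 : ∀ x, a * ‖x‖ ≤ ‖toEuclideanLin Λ1 x‖) (hΛ2 : ‖Λ2‖ ≤ b)
    (hba : b ≤ a) (hX : ∀ v, σ * ‖v‖ ≤ ‖toEuclideanLin X v‖)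
    (hF : ∀ v, √(‖toEuclideanLin F1 v‖ ^ 2 + ‖toEuclideanLin F2 v‖ ^ 2) ≤ ε * ‖v‖)
    (v : EuclideanSpace 𝕜 r) :
    ‖toEuclideanLin (Λ2 * Y + F2) v‖ + (‖T‖ * (a - b) * σ - √(1 + ‖T‖ ^ 2) * ε) * ‖v‖
      ≤ ‖T‖ * ‖toEuclideanLin (Λ1 * X + F1) v‖ := by
  set t := ‖T‖
  simp only [map_add, LinearMap.add_apply, toLpLin_mul_same, LinearMap.comp_apply]
  have hYv : ‖toEuclideanLin Y v‖ ≤ t * ‖toEuclideanLin X v‖ := by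
    rw [← hTX, toLpLin_mul_same, LinearMap.comp_apply]
    exact norm_toEuclideanLin_apply_le _ _
  have hupper : ‖toEuclideanLin Λ2 (toEuclideanLin Y v) + toEuclideanLin F2 v‖
      ≤ b * (t * ‖toEuclideanLin X v‖) + ‖toEuclideanLin F2 v‖ := by
    refine (norm_add_le _ _).trans (add_le_add_left ?_ _)
    exact (norm_toEuclideanLin_apply_le _ _).trans
      (mul_le_mul hΛ2 hYv (norm_nonneg _) ((norm_nonneg _).trans hΛ2))
  have hlower : a * ‖toEuclideanLin X v‖ - ‖toEuclideanLin F1 v‖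
      ≤ ‖toEuclideanLin Λ1 (toEuclideanLin X v) + toEuclideanLin F1 v‖ := by
    linarith [hΛ1 (toEuclideanLin X v),
      norm_le_add_norm_add (toEuclideanLin Λ1 (toEuclideanLin X v)) (toEuclideanLin F1 v)]
  have hCS : t * ‖toEuclideanLin F1 v‖ + ‖toEuclideanLin F2 v‖ ≤ √(1 + t ^ 2) * (ε * ‖v‖) :=
    (mul_add_le_sqrt_mul_sqrt _ _ _).trans (mul_le_mul_of_nonneg_left (hF v) (by positivity))
  have hσ : t * (a - b) * (σ * ‖v‖) ≤ t * (a - b) * ‖toEuclideanLin X v‖ :=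
    mul_le_mul_of_nonneg_left (hX v) (mul_nonneg (norm_nonneg _) (sub_nonneg.2 hba))
  have := mul_le_mul_of_nonneg_left hlower (norm_nonneg T)
  nlinarith

lemma l2_opNorm_mul_nonsing_inv_lt [Nonempty n] {B : Matrix n n 𝕜} {C : Matrix l n 𝕜}
    (hB : IsUnit B) {t δ : ℝ} (hδ : 0 < δ)
    (h : ∀ v, ‖toEuclideanLin C v‖ + δ * ‖v‖ ≤ t * ‖toEuclideanLin B v‖) :
    ‖C * B⁻¹‖ < t := by
  have hBpos : 0 < ‖B‖ := norm_pos_iff.2 hB.ne_zero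
  have hbound : ∀ u, ‖toEuclideanLin (C * B⁻¹) u‖ ≤ (t - δ / ‖B‖) * ‖u‖ := by
    intro u
    have hBB : toEuclideanLin B (toEuclideanLin B⁻¹ u) = u := by
      rw [← LinearMap.comp_apply, ← toLpLin_mul_same,
        mul_nonsing_inv _ ((isUnit_iff_isUnit_det B).1 hB), toLpLin_one, LinearMap.id_apply]
    have hu : ‖u‖ ≤ ‖B‖ * ‖toEuclideanLin B⁻¹ u‖ := by
      simpa [hBB] using norm_toEuclideanLin_apply_le B (toEuclideanLin B⁻¹ u)
    have hδu : δ * ‖u‖ / ‖B‖ ≤ δ * ‖toEuclideanLin B⁻¹ u‖ := by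
      rw [div_le_iff₀ hBpos, mul_assoc, mul_comm _ ‖B‖]
      exact mul_le_mul_of_nonneg_left hu hδ.le
    have hv := h (toEuclideanLin B⁻¹ u)
    rw [hBB] at hv
    rw [toLpLin_mul_same, LinearMap.comp_apply, sub_mul, div_mul_eq_mul_div]
    linarith
  have hnonneg : 0 ≤ t - δ / ‖B‖ := by
    obtain ⟨i⟩ := ‹Nonempty n›
    simpa using (norm_nonneg _).trans (hbound (EuclideanSpace.single i 1))
  exact (l2_opNorm_le_of_forall_le hnonneg hbound).trans_lt (sub_lt_self _ (div_pos hδ hBpos))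

end Matrix

lemma smallestSingularValue_mul_norm_le {p : ℕ} (X : Matrix (Fin p) (Fin p) ℂ)
    (v : EuclideanSpace ℂ (Fin p)) : smallestSingularValue X * ‖v‖ ≤ ‖toEuclideanLin X v‖ := by
  rcases eq_or_ne v 0 with rfl | hv
  · simp
  have hunit : ‖(‖v‖⁻¹ : ℂ) • v‖ = 1 := norm_smul_inv_norm hv
  have hbdd : BddBelow (Set.range fun u : {u : EuclideanSpace ℂ (Fin p) // ‖u‖ = 1} =>
      ‖toEuclideanLin X u.1‖) := ⟨0, by rintro _ ⟨u, rfl⟩; positivity⟩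
  have hle : smallestSingularValue X ≤ ‖toEuclideanLin X ((‖v‖⁻¹ : ℂ) • v)‖ :=
    ciInf_le hbdd ⟨_, hunit⟩
  rw [map_smul, norm_smul, norm_inv, Complex.norm_real, norm_norm] at hle
  rwa [← le_div_iff₀ (norm_pos_iff.2 hv), div_eq_inv_mul]

lemma smallestSingularValue_nonneg {p : ℕ} (X : Matrix (Fin p) (Fin p) ℂ) :
    0 ≤ smallestSingularValue X :=
  Real.iInf_nonneg fun _ => norm_nonneg _

lemma smallestSingularValue_le_l2_opNorm {p : ℕ} [NeZero p] (X : Matrix (Fin p) (Fin p) ℂ) :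
    smallestSingularValue X ≤ ‖X‖ := by
  simpa using (smallestSingularValue_mul_norm_le X (EuclideanSpace.single 0 1)).trans
    (norm_toEuclideanLin_apply_le X _)

theorem stmt9_general {m k : ℕ}
    (A : Matrix (Fin (m + 1 + (k + 1))) (Fin (m + 1 + (k + 1))) ℂ)
    (hA : A.IsHermitian)
    (Ψ1 : Matrix (Fin (m + 1 + (k + 1))) (Fin (m + 1)) ℂ)
    (Ψ2 : Matrix (Fin (m + 1 + (k + 1))) (Fin (k + 1)) ℂ)
    (hcomplete : Ψ1 * Ψ1ᴴ + Ψ2 * Ψ2ᴴ = 1)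
    (lam1 : Fin (m + 1) → ℂ) (lam2 : Fin (k + 1) → ℂ)
    (heig1 : A * Ψ1 = Ψ1 * Matrix.diagonal lam1)
    (heig2 : A * Ψ2 = Ψ2 * Matrix.diagonal lam2)
    (hord1 : ∀ i i' : Fin (m + 1), i ≤ i' → ‖lam1 i'‖ ≤ ‖lam1 i‖)
    (hord2 : ∀ j j' : Fin (k + 1), j ≤ j' → ‖lam2 j'‖ ≤ ‖lam2 j‖)
    (hgap : ‖lam2 0‖ < ‖lam1 (Fin.last m)‖)
    (V : Matrix (Fin (m + 1 + (k + 1))) (Fin (m + 1)) ℂ)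
    (Φ : Matrix (Fin (m + 1)) (Fin (m + 1)) ℂ)
    (E : Matrix (Fin (m + 1 + (k + 1))) (Fin (m + 1)) ℂ)
    (V' : Matrix (Fin (m + 1 + (k + 1))) (Fin (m + 1)) ℂ)
    (hV' : V' = A * V * Φ + E)
    (hVΦ : IsUnit (Ψ1ᴴ * (V * Φ)))
    (hV'inv : IsUnit (Ψ1ᴴ * V'))
    (hE : ‖E‖ / ‖lam1 (Fin.last m)‖
        < (1 / cond2 (Ψ1ᴴ * (V * Φ))
            - ‖lam2 0‖ / ‖lam1 (Fin.last m)‖)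
          * ‖Ψ1ᴴ * (V * Φ)‖ * ‖Ψ2ᴴ * (V * Φ)‖ / ‖V * Φ‖) :
    ‖Ψ2ᴴ * V' * (Ψ1ᴴ * V')⁻¹‖ < ‖Ψ2ᴴ * (V * Φ) * (Ψ1ᴴ * (V * Φ))⁻¹‖ := by
  set X := Ψ1ᴴ * (V * Φ)
  set T := Ψ2ᴴ * (V * Φ) * X⁻¹
  have hTX : T * X = Ψ2ᴴ * (V * Φ) := by
    rw [Matrix.mul_assoc, nonsing_inv_mul _ ((isUnit_iff_isUnit_det X).1 hVΦ), Matrix.mul_one]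
  have hblock : ∀ {p : ℕ} (Ψ : Matrix (Fin (m + 1 + (k + 1))) (Fin p) ℂ) (d : Fin p → ℂ),
      A * Ψ = Ψ * diagonal d →
      Ψᴴ * V' = diagonal (star d) * (Ψᴴ * (V * Φ)) + Ψᴴ * E := fun Ψ d h => by
    rw [hV', Matrix.mul_add, Matrix.mul_assoc A, ← Matrix.mul_assoc, hA.conjTranspose_mul_eq h,
      Matrix.mul_assoc]
  have hmargin : √(1 + ‖T‖ ^ 2) * ‖E‖
      < ‖T‖ * (‖lam1 (Fin.last m)‖ - ‖lam2 0‖) * smallestSingularValue X :=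
    mul_lt_mul_sub_mul_of_div_lt ((norm_nonneg _).trans_lt hgap) hgap.le (norm_nonneg _)
      (smallestSingularValue_nonneg X) (smallestSingularValue_le_l2_opNorm X) (norm_nonneg _)
      (Real.sqrt_pos.2 (by positivity)) (norm_nonneg _) (norm_nonneg _)
      (l2_opNorm_mul_sqrt_one_add_sq_le hcomplete hTX) hE
  refine l2_opNorm_mul_nonsing_inv_lt hV'inv (sub_pos.2 hmargin) fun v => ?_
  rw [hblock Ψ1 lam1 heig1, hblock Ψ2 lam2 heig2]
  refine norm_add_le_of_perturbed_blocks hTX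
    (mul_norm_le_norm_toEuclideanLin_diagonal (norm_nonneg _) fun i => ?_)
    (l2_opNorm_diagonal_le (norm_nonneg _) fun j => ?_) hgap.le
    (smallestSingularValue_mul_norm_le X) (fun w => ?_) v
  · rw [Pi.star_apply, norm_star]
    exact hord1 i _ (Fin.le_last i)
  · rw [Pi.star_apply, norm_star]
    exact hord2 0 j (Fin.zero_le j)
  · rw [norm_sq_add_norm_sq_of_mul_conjTranspose_add hcomplete, Real.sqrt_sq (norm_nonneg _)]
    exact norm_toEuclideanLin_apply_le E w

/-- Inexact subspace iteration makes progress. `A` Hermitian with unitary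
eigenvector matrix `Ψ = [Ψ₁, Ψ₂]`, eigenvalue magnitudes non-increasing in each block,
`|λ_{m+1}| < |λ_m|` (with `λ_m = lam1 (Fin.last m)`, `λ_{m+1} = lam2 0`), `λ_m ≠ 0`.
With `Φ` invertible, `Ψ₁ᴴ V Φ` invertible, truncation error matrix `E`,
`V' = A V Φ + E` with `Ψ₁ᴴ V'` invertible and `Ψ₂ᴴ V Φ ≠ 0`: if
`‖E‖₂/|λ_m| < (1/κ₂(Ψ₁ᴴ V Φ) - |λ_{m+1}/λ_m|)·‖Ψ₁ᴴ V Φ‖₂·‖Ψ₂ᴴ V Φ‖₂/‖V Φ‖₂`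
then `σ₁(T_{V'}) < σ₁(T_{VΦ})`, i.e. the largest principal angle between `range(V')` and
`range(Ψ₁)` is strictly smaller than that between `range(V)` and `range(Ψ₁)`. -/
theorem stmt9 {m k : ℕ}
    (A : Matrix (Fin (m + 1 + (k + 1))) (Fin (m + 1 + (k + 1))) ℂ)
    (hA : A.IsHermitian)
    (Ψ1 : Matrix (Fin (m + 1 + (k + 1))) (Fin (m + 1)) ℂ)
    (Ψ2 : Matrix (Fin (m + 1 + (k + 1))) (Fin (k + 1)) ℂ)
    (hU11 : Ψ1ᴴ * Ψ1 = 1) (hU22 : Ψ2ᴴ * Ψ2 = 1) (hU12 : Ψ1ᴴ * Ψ2 = 0)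
    (hcomplete : Ψ1 * Ψ1ᴴ + Ψ2 * Ψ2ᴴ = 1)
    (lam1 : Fin (m + 1) → ℂ) (lam2 : Fin (k + 1) → ℂ)
    (heig1 : A * Ψ1 = Ψ1 * Matrix.diagonal lam1)
    (heig2 : A * Ψ2 = Ψ2 * Matrix.diagonal lam2)
    (hord1 : ∀ i i' : Fin (m + 1), i ≤ i' → ‖lam1 i'‖ ≤ ‖lam1 i‖)
    (hord2 : ∀ j j' : Fin (k + 1), j ≤ j' → ‖lam2 j'‖ ≤ ‖lam2 j‖)
    (hgap : ‖lam2 0‖ < ‖lam1 (Fin.last m)‖)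
    (hm0 : lam1 (Fin.last m) ≠ 0)
    (V : Matrix (Fin (m + 1 + (k + 1))) (Fin (m + 1)) ℂ)
    (Φ : Matrix (Fin (m + 1)) (Fin (m + 1)) ℂ) (hΦ : IsUnit Φ)
    (E : Matrix (Fin (m + 1 + (k + 1))) (Fin (m + 1)) ℂ)
    (V' : Matrix (Fin (m + 1 + (k + 1))) (Fin (m + 1)) ℂ)
    (hV' : V' = A * V * Φ + E)
    (hVΦ : IsUnit (Ψ1ᴴ * (V * Φ)))
    (hV'inv : IsUnit (Ψ1ᴴ * V'))
    (hne : Ψ2ᴴ * (V * Φ) ≠ 0)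
    (hE : ‖E‖ / ‖lam1 (Fin.last m)‖
        < (1 / cond2 (Ψ1ᴴ * (V * Φ))
            - ‖lam2 0‖ / ‖lam1 (Fin.last m)‖)
          * ‖Ψ1ᴴ * (V * Φ)‖ * ‖Ψ2ᴴ * (V * Φ)‖ / ‖V * Φ‖) :
    ‖Ψ2ᴴ * V' * (Ψ1ᴴ * V')⁻¹‖ < ‖Ψ2ᴴ * (V * Φ) * (Ψ1ᴴ * (V * Φ))⁻¹‖ :=
  stmt9_general A hA Ψ1 Ψ2 hcomplete lam1 lam2 heig1 heig2 hord1 hord2 hgap V Φ E V' hV' hVΦ hV'inv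
    hE
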